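/- arXiv:2106.00771 — 3 statements merged into one kernel-verified Lean document; each statement's English description precedes it below -/
import Mathlib

section
/- (Lemma 2, first moment.) In the correlated IRS model with equal phase shifts, the end-to-end channel gain H = |Σ_{i=1}^M h_i g_i|² satisfies E[H] = M + Σ_{(i,k) : i ≠ k} (ρ i k)², where the sum runs over all ordered pairs of distinct indices. -/
open MeasureTheory ProbabilityTheory Complex

/-- A family of real random variables that are mutually independent and each
distributed as a real Gaussian with mean `0` and variance `1/2`. -/
def StdRealGaussians {Ω : Type*} [MeasurableSpace Ω] {ι : Type*}
    (P : Measure Ω) (x : ι → Ω → ℝ) : Prop :=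
  (∀ i, Measurable (x i)) ∧
  iIndepFun x P ∧
  ∀ i, Measure.map (x i) P = gaussianReal 0 (1/2)

/-!
Expanding `|∑ᵢ hᵢ gᵢ|² = ∑ᵢ ∑ₖ (hᵢ h̄ₖ)(gᵢ ḡₖ)` and using that the vector `h` is independent of
`g` gives `E[H] = ∑ᵢ ∑ₖ E[hᵢ h̄ₖ] E[gᵢ ḡₖ]`. A standard complex Gaussian vector `z` is isotropic,
`E[zⱼ z̄ₗ] = δⱼₗ`, since its real and imaginary parts each carry variance `1/2`; hence
`E[hᵢ h̄ₖ] = (A Aᴴ)ᵢₖ = ρᵢₖ`, likewise for `g`, and `E[H] = ∑ᵢ ∑ₖ ρᵢₖ²`, whose diagonal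
contributes `M`.
-/

open scoped ComplexConjugate Matrix

section

variable {Ω ι κ : Type*} [MeasurableSpace Ω] {P : Measure Ω}

lemma ProbabilityTheory.iIndepFun.indepFun_sumElim {β : Type*} [MeasurableSpace β]
    [Fintype ι] [Fintype κ] {f : ι → Ω → β} {g : κ → Ω → β}
    (hfg : iIndepFun (Sum.elim f g) P) (hm : ∀ a, Measurable (Sum.elim f g a)) :
    IndepFun (fun ω i => f i ω) (fun ω k => g k ω) P := by
  have hST : Disjoint (Finset.univ.map (.inl : ι ↪ ι ⊕ κ)) (Finset.univ.map .inr) := by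
    simp [Finset.disjoint_left]
  exact (hfg.indepFun_finset _ _ hST hm).comp
    (φ := fun v i => v ⟨.inl i, by simp⟩) (ψ := fun v k => v ⟨.inr k, by simp⟩)
    (measurable_pi_lambda _ fun _ => measurable_pi_apply _)
    (measurable_pi_lambda _ fun _ => measurable_pi_apply _)

namespace StdRealGaussians

variable {W : ι → Ω → ℝ}

lemma comp_injective {e : κ → ι} (hW : StdRealGaussians P W) (he : e.Injective) :
    StdRealGaussians P (W ∘ e) :=
  ⟨fun k => hW.1 (e k), hW.2.1.precomp (g := e) he, fun k => hW.2.2 (e k)⟩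

lemma memLp_two (hW : StdRealGaussians P W) (a : ι) : MemLp (W a) 2 P := by
  have h := memLp_id_gaussianReal' (μ := 0) (v := 1/2) 2 (by simp)
  rwa [← hW.2.2 a, memLp_map_measure_iff aestronglyMeasurable_id (hW.1 a).aemeasurable] at h

lemma integral_eq_zero (hW : StdRealGaussians P W) (a : ι) : ∫ ω, W a ω ∂P = 0 := by
  rw [← integral_map (f := fun x : ℝ => x) (hW.1 a).aemeasurable aestronglyMeasurable_id,
    hW.2.2 a]
  exact integral_id_gaussianReal

lemma integrable_mul (hW : StdRealGaussians P W) (a b : ι) :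
    Integrable (fun ω => W a ω * W b ω) P :=
  (hW.memLp_two a).integrable_mul (hW.memLp_two b)

lemma integral_mul [DecidableEq ι] (hW : StdRealGaussians P W) (a b : ι) :
    ∫ ω, W a ω * W b ω ∂P = if a = b then 1/2 else 0 := by
  split_ifs with hab
  · subst hab
    have hvar := variance_of_integral_eq_zero (μ := gaussianReal 0 (1/2)) aemeasurable_id
      integral_id_gaussianReal
    rw [variance_id_gaussianReal] at hvar
    simp_rw [← sq]
    rw [← integral_map (f := fun x : ℝ => x ^ 2) (hW.1 a).aemeasurable (by fun_prop), hW.2.2 a]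
    simpa using hvar.symm
  · rw [(hW.2.1.indepFun hab).integral_fun_mul_eq_mul_integral (hW.1 a).aestronglyMeasurable
      (hW.1 b).aestronglyMeasurable, hW.integral_eq_zero a, zero_mul]

end StdRealGaussians

def complexOfReIm (x y : ι → Ω → ℝ) (ω : Ω) (j : ι) : ℂ := x j ω + I * y j ω

namespace StdRealGaussians

variable {x y : ι → Ω → ℝ}

lemma memLp_complexOfReIm (hW : StdRealGaussians P (Sum.elim x y)) (j : ι) :
    MemLp (fun ω => complexOfReIm x y ω j) 2 P :=
  MemLp.add (f := fun ω => (x j ω : ℂ)) (g := fun ω => I * y j ω)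
    (hW.memLp_two (.inl j)).ofReal ((hW.memLp_two (.inr j)).ofReal.const_mul I)

lemma integral_complexOfReIm_mul_conj [DecidableEq ι]
    (hW : StdRealGaussians P (Sum.elim x y)) (j l : ι) :
    ∫ ω, complexOfReIm x y ω j * conj (complexOfReIm x y ω l) ∂P = if j = l then 1 else 0 := by
  have ixx : Integrable (fun ω => x j ω * x l ω) P := hW.integrable_mul (.inl j) (.inl l)
  have iyy : Integrable (fun ω => y j ω * y l ω) P := hW.integrable_mul (.inr j) (.inr l)
  have iyx : Integrable (fun ω => y j ω * x l ω) P := hW.integrable_mul (.inr j) (.inl l)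
  have ixy : Integrable (fun ω => x j ω * y l ω) P := hW.integrable_mul (.inl j) (.inr l)
  have hxx := hW.integral_mul (.inl j) (.inl l)
  have hyy := hW.integral_mul (.inr j) (.inr l)
  have hyx := hW.integral_mul (.inr j) (.inl l)
  have hxy := hW.integral_mul (.inl j) (.inr l)
  simp only [Sum.elim_inl, Sum.elim_inr, Sum.inl.injEq, Sum.inr.injEq, reduceCtorEq,
    if_false] at hxx hyy hyx hxy
  have hre : ∫ ω, x j ω * x l ω + y j ω * y l ω ∂P = if j = l then 1 else 0 := by
    rw [integral_add ixx iyy, hxx, hyy]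
    split_ifs <;> norm_num
  have him : ∫ ω, y j ω * x l ω - x j ω * y l ω ∂P = 0 := by
    rw [integral_sub iyx ixy, hyx, hxy, sub_zero]
  have hexpand : ∀ ω, complexOfReIm x y ω j * conj (complexOfReIm x y ω l)
      = ((x j ω * x l ω + y j ω * y l ω : ℝ) : ℂ)
        + I * ((y j ω * x l ω - x j ω * y l ω : ℝ) : ℂ) := by
    intro ω
    apply Complex.ext
    · simp [complexOfReIm]
    · simp [complexOfReIm]; ring
  simp_rw [hexpand]
  rw [integral_add (f := fun ω => ((x j ω * x l ω + y j ω * y l ω : ℝ) : ℂ))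
    (g := fun ω => I * ((y j ω * x l ω - x j ω * y l ω : ℝ) : ℂ)) (ixx.add iyy).ofReal
    ((iyx.sub ixy).ofReal.const_mul I), integral_const_mul, integral_complex_ofReal,
    integral_complex_ofReal, hre, him]
  split_ifs <;> simp

lemma indepFun_complexOfReIm [Fintype ι] {x' y' : ι → Ω → ℝ}
    (hW : StdRealGaussians P (Sum.elim (Sum.elim x y) (Sum.elim x' y'))) :
    IndepFun (complexOfReIm x y) (complexOfReIm x' y') P := by
  have hmeas : Measurable fun v : ι ⊕ ι → ℝ => fun j => (v (.inl j) : ℂ) + I * v (.inr j) := by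
    fun_prop
  exact (hW.2.1.indepFun_sumElim hW.1).comp hmeas hmeas

end StdRealGaussians

lemma integrable_mul_conj_of_memLp {f g : Ω → ℂ} (hf : MemLp f 2 P) (hg : MemLp g 2 P) :
    Integrable (fun ω => f ω * conj (g ω)) P :=
  hf.integrable_mul hg.star

section IsotropicVector

variable [Fintype ι] {z : Ω → ι → ℂ}

lemma memLp_mulVec (hz : ∀ j, MemLp (fun ω => z ω j) 2 P) (A : Matrix κ ι ℂ) (i : κ) :
    MemLp (fun ω => (A *ᵥ z ω) i) 2 P :=
  memLp_finsetSum _ fun j _ => (hz j).const_mul (A i j)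

lemma integral_mulVec_mul_conj [DecidableEq ι] (hz : ∀ j, MemLp (fun ω => z ω j) 2 P)
    (hcov : ∀ j l, ∫ ω, z ω j * conj (z ω l) ∂P = if j = l then 1 else 0)
    (A : Matrix κ ι ℂ) (i k : κ) :
    ∫ ω, (A *ᵥ z ω) i * conj ((A *ᵥ z ω) k) ∂P = (A * Aᴴ) i k := by
  have hexpand : ∀ ω, (A *ᵥ z ω) i * conj ((A *ᵥ z ω) k)
      = ∑ j, ∑ l, A i j * conj (A k l) * (z ω j * conj (z ω l)) := by
    intro ω
    simp only [Matrix.mulVec, dotProduct, map_sum, map_mul, Finset.sum_mul_sum]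
    exact Finset.sum_congr rfl fun j _ => Finset.sum_congr rfl fun l _ => by ring
  have hint : ∀ j l, Integrable (fun ω => z ω j * conj (z ω l)) P :=
    fun j l => integrable_mul_conj_of_memLp (hz j) (hz l)
  simp_rw [hexpand]
  rw [integral_finsetSum _ fun j _ => integrable_finsetSum _ fun l _ => (hint j l).const_mul _]
  simp_rw [integral_finsetSum _ fun l _ => (hint _ l).const_mul _, integral_const_mul, hcov]
  simp [Matrix.mul_apply, Matrix.conjTranspose_apply]

end IsotropicVector

lemma integral_norm_sum_mul_sq [Fintype ι] {u v : Ω → ι → ℂ}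
    (hu : ∀ i, MemLp (fun ω => u ω i) 2 P) (hv : ∀ i, MemLp (fun ω => v ω i) 2 P)
    (huv : IndepFun u v P) :
    ((∫ ω, ‖∑ i, u ω i * v ω i‖ ^ 2 ∂P : ℝ) : ℂ)
      = ∑ i, ∑ k, (∫ ω, u ω i * conj (u ω k) ∂P) * ∫ ω, v ω i * conj (v ω k) ∂P := by
  have hexpand : ∀ ω, ((‖∑ i, u ω i * v ω i‖ ^ 2 : ℝ) : ℂ)
      = ∑ i, ∑ k, u ω i * conj (u ω k) * (v ω i * conj (v ω k)) := by
    intro ω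
    rw [Complex.sq_norm, ← Complex.mul_conj, map_sum, Finset.sum_mul_sum]
    exact Finset.sum_congr rfl fun i _ => Finset.sum_congr rfl fun k _ => by
      rw [map_mul]; ring
  have hindep : ∀ i k,
      IndepFun (fun ω => u ω i * conj (u ω k)) (fun ω => v ω i * conj (v ω k)) P :=
    fun i k => huv.comp (φ := fun a : ι → ℂ => a i * conj (a k))
      (ψ := fun a : ι → ℂ => a i * conj (a k)) (by fun_prop) (by fun_prop)
  have hint_u : ∀ i k, Integrable (fun ω => u ω i * conj (u ω k)) P :=
    fun i k => integrable_mul_conj_of_memLp (hu i) (hu k)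
  have hint_v : ∀ i k, Integrable (fun ω => v ω i * conj (v ω k)) P :=
    fun i k => integrable_mul_conj_of_memLp (hv i) (hv k)
  have hterm : ∀ i k,
      Integrable (fun ω => u ω i * conj (u ω k) * (v ω i * conj (v ω k))) P :=
    fun i k => (hindep i k).integrable_mul (hint_u i k) (hint_v i k)
  rw [← integral_complex_ofReal]
  simp_rw [hexpand]
  rw [integral_finsetSum _ fun i _ => integrable_finsetSum _ fun k _ => hterm i k]
  simp_rw [integral_finsetSum _ fun k _ => hterm _ k]
  exact Finset.sum_congr rfl fun i _ => Finset.sum_congr rfl fun k _ =>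
    (hindep i k).integral_fun_mul_eq_mul_integral (hint_u i k).aestronglyMeasurable
      (hint_v i k).aestronglyMeasurable

lemma sum_sum_sq_eq_card_add_sum_filter_ne [Fintype ι] [DecidableEq ι] {ρ : ι → ι → ℝ}
    (hdiag : ∀ i, ρ i i = 1) :
    ∑ i, ∑ k, ρ i k ^ 2
      = Fintype.card ι + ∑ p ∈ Finset.univ.filter (fun p : ι × ι => p.1 ≠ p.2), ρ p.1 p.2 ^ 2 := by
  rw [← Fintype.sum_prod_type' (f := fun i k => ρ i k ^ 2),
    ← Finset.sum_filter_not_add_sum_filter _ (fun p : ι × ι => p.1 ≠ p.2)]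
  congr 1
  simp [Finset.sum_filter, Fintype.sum_prod_type, hdiag]

end

theorem stmt5_general {Ω : Type*} [MeasurableSpace Ω] (P : Measure Ω)
    {M : ℕ}
    (ρ : Fin M → Fin M → ℝ)
    (hdiag : ∀ i, ρ i i = 1)
    (A B : Matrix (Fin M) (Fin M) ℂ)
    (hA : ∀ i k, (A * A.conjTranspose) i k = (ρ i k : ℂ))
    (hB : ∀ i k, (B * B.conjTranspose) i k = (ρ i k : ℂ))
    (xh yh xg yg : Fin M → Ω → ℝ)
    -- the underlying `4M` real Gaussians are mutually independent
    (hzz : StdRealGaussians P (Sum.elim (Sum.elim xh yh) (Sum.elim xg yg)))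
    -- the correlated channel vectors
    (h g : Fin M → Ω → ℂ)
    (hh : ∀ i ω, h i ω = ∑ j, A i j * (xh j ω + Complex.I * yh j ω))
    (hg : ∀ i ω, g i ω = ∑ j, B i j * (xg j ω + Complex.I * yg j ω))
    -- the end-to-end channel gain under equal phase shifts
    (H : Ω → ℝ)
    (hH : ∀ ω, H ω = ‖∑ i, h i ω * g i ω‖ ^ 2) :
    ∫ ω, H ω ∂P =
      M + ∑ p ∈ Finset.univ.filter (fun p : Fin M × Fin M => p.1 ≠ p.2),
        (ρ p.1 p.2) ^ 2 := by
  obtain rfl : h = fun i ω => (A *ᵥ complexOfReIm xh yh ω) i := funext fun i => funext (hh i)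
  obtain rfl : g = fun i ω => (B *ᵥ complexOfReIm xg yg ω) i := funext fun i => funext (hg i)
  have hWh : StdRealGaussians P (Sum.elim xh yh) := hzz.comp_injective Sum.inl_injective
  have hWg : StdRealGaussians P (Sum.elim xg yg) := hzz.comp_injective Sum.inr_injective
  have hmulVec : ∀ C : Matrix (Fin M) (Fin M) ℂ, Measurable (C *ᵥ ·) :=
    fun C => (continuous_const.matrix_mulVec continuous_id).measurable
  have hgain := integral_norm_sum_mul_sq (memLp_mulVec hWh.memLp_complexOfReIm A)
    (memLp_mulVec hWg.memLp_complexOfReIm B)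
    (hzz.indepFun_complexOfReIm.comp (hmulVec A) (hmulVec B))
  simp only [← hH, integral_mulVec_mul_conj hWh.memLp_complexOfReIm
    hWh.integral_complexOfReIm_mul_conj, integral_mulVec_mul_conj hWg.memLp_complexOfReIm
    hWg.integral_complexOfReIm_mul_conj, hA, hB] at hgain
  have hsum := sum_sum_sq_eq_card_add_sum_filter_ne hdiag
  rw [Fintype.card_fin] at hsum
  apply Complex.ofReal_injective
  rw [hgain, ← hsum]
  push_cast [sq]
  rfl

theorem stmt5 {Ω : Type*} [MeasurableSpace Ω] (P : Measure Ω) [IsProbabilityMeasure P]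
    {M : ℕ}
    (ρ : Fin M → Fin M → ℝ)
    (hsymm : ∀ i k, ρ i k = ρ k i) (hdiag : ∀ i, ρ i i = 1)
    (hbnd : ∀ i k, 0 ≤ ρ i k ∧ ρ i k ≤ 1)
    (A B : Matrix (Fin M) (Fin M) ℂ)
    (hA : ∀ i k, (A * A.conjTranspose) i k = (ρ i k : ℂ))
    (hB : ∀ i k, (B * B.conjTranspose) i k = (ρ i k : ℂ))
    (xh yh xg yg : Fin M → Ω → ℝ)
    -- the underlying `4M` real Gaussians are mutually independent
    (hzz : StdRealGaussians P (Sum.elim (Sum.elim xh yh) (Sum.elim xg yg)))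
    -- the correlated channel vectors
    (h g : Fin M → Ω → ℂ)
    (hh : ∀ i ω, h i ω = ∑ j, A i j * (xh j ω + Complex.I * yh j ω))
    (hg : ∀ i ω, g i ω = ∑ j, B i j * (xg j ω + Complex.I * yg j ω))
    -- the end-to-end channel gain under equal phase shifts
    (H : Ω → ℝ)
    (hH : ∀ ω, H ω = ‖∑ i, h i ω * g i ω‖ ^ 2) :
    ∫ ω, H ω ∂P =
      M + ∑ p ∈ Finset.univ.filter (fun p : Fin M × Fin M => p.1 ≠ p.2),
        (ρ p.1 p.2) ^ 2 :=
  stmt5_general P ρ hdiag A B hA hB xh yh xg yg hzz h g hh hg H hH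
end

section
/- (Optimal phase configuration, no correlation, fourth moment.) Let h_1,…,h_M, g_1,…,g_M be 2M mutually independent standard circularly-symmetric complex Gaussians, i.e. h_i = x_i + I·y_i and g_i = u_i + I·v_i where all 4M real random variables x_i, y_i, u_i, v_i are mutually independent real Gaussians with mean 0 and variance 1/2. Then E[(Σ_{i=1}^M |h_i|·|g_i|)⁴] = 4M + 6·C(M,2)·(3π²/16 + 1) + 9·C(M,3)·π²/4 + 3·C(M,4)·π⁴/32, where C(M,j) denotes the binomial coefficient 'M choose j'. -/
open MeasureTheory ProbabilityTheory Complex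

/-!
Write `aᵢ = |hᵢ| |gᵢ|`. Each `aᵢ` is a function of its own block `(xᵢ, yᵢ, uᵢ, vᵢ)`, so the `aᵢ` are
independent, and `|hᵢ|`, `|gᵢ|` are independent Rayleigh variables whose moments
`E|h|ᵏ = Γ(k/2 + 1)` come from the Gaussian density in polar coordinates; hence
`μₖ := E aᵢᵏ = Γ(k/2 + 1)²`, i.e. `μ₁ = π/4, μ₂ = 1, μ₃ = 9π/16, μ₄ = 4`. Expanding
`(aⱼ + S)ⁿ` binomially with `aⱼ` independent of the partial sum `S` gives the moments of
`∑ aᵢ` by induction on the number of summands, and the fourth one is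
`M μ₄ + C(M,2) (8 μ₃ μ₁ + 6 μ₂²) + 36 C(M,3) μ₂ μ₁² + 24 C(M,4) μ₁⁴`.
-/

open Finset
open scoped Real

/-- `sumMoment μ N n` is the `n`-th moment of a sum of `N` independent random variables whose
`k`-th moments are `μ k`. -/
noncomputable def sumMoment (μ : ℕ → ℝ) : ℕ → ℕ → ℝ
  | 0, n => 0 ^ n
  | N + 1, n => ∑ k ∈ range (n + 1), n.choose k * μ k * sumMoment μ N (n - k)

section sumMoment

variable {μ : ℕ → ℝ} (hμ : μ 0 = 1)
include hμ

lemma sumMoment_zero (N : ℕ) : sumMoment μ N 0 = 1 := by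
  induction N with
  | zero => simp [sumMoment]
  | succ N ih => simp [sumMoment, hμ, ih]

lemma sumMoment_one (N : ℕ) : sumMoment μ N 1 = N * μ 1 := by
  induction N with
  | zero => simp [sumMoment]
  | succ N ih =>
    simp only [sumMoment, sum_range_succ, range_one, sum_singleton, Nat.choose_zero_right,
      Nat.choose_self, Nat.cast_add, Nat.cast_one, tsub_zero, tsub_self, hμ, ih, sumMoment_zero hμ]
    ring

lemma sumMoment_two (N : ℕ) :
    sumMoment μ N 2 = N * μ 2 + 2 * N.choose 2 * μ 1 ^ 2 := by
  induction N with
  | zero => simp [sumMoment]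
  | succ N ih =>
    simp only [sumMoment, sum_range_succ, range_one, sum_singleton, Nat.choose_zero_right,
      Nat.choose_self, Nat.choose_one_right, Nat.choose_succ_succ, Nat.cast_add, Nat.cast_one,
      Nat.reduceSub, tsub_zero, tsub_self, hμ, ih, sumMoment_zero hμ, sumMoment_one hμ]
    ring

lemma sumMoment_three (N : ℕ) :
    sumMoment μ N 3 = N * μ 3 + 6 * N.choose 2 * μ 2 * μ 1 + 6 * N.choose 3 * μ 1 ^ 3 := by
  induction N with
  | zero => simp [sumMoment]
  | succ N ih =>
    simp only [sumMoment, sum_range_succ, range_one, sum_singleton, Nat.choose_zero_right,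
      Nat.choose_self, Nat.choose_one_right, Nat.choose_succ_succ, Nat.cast_add, Nat.cast_one,
      Nat.reduceSub, tsub_zero, tsub_self, hμ, ih, sumMoment_zero hμ, sumMoment_one hμ,
      sumMoment_two hμ]
    ring

lemma sumMoment_four (N : ℕ) :
    sumMoment μ N 4 = N * μ 4 + N.choose 2 * (8 * μ 3 * μ 1 + 6 * μ 2 ^ 2)
      + 36 * N.choose 3 * μ 2 * μ 1 ^ 2 + 24 * N.choose 4 * μ 1 ^ 4 := by
  induction N with
  | zero => simp [sumMoment]
  | succ N ih =>
    simp only [sumMoment, sum_range_succ, range_one, sum_singleton, Nat.choose_zero_right,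
      Nat.choose_self, Nat.choose_one_right, Nat.choose_succ_succ, Nat.cast_add, Nat.cast_one,
      Nat.reduceSub, tsub_zero, tsub_self, hμ, ih, sumMoment_zero hμ, sumMoment_one hμ,
      sumMoment_two hμ, sumMoment_three hμ]
    ring

end sumMoment

lemma integral_norm_pow_mul_exp_neg_sq (k : ℕ) :
    ∫ z : ℂ, ‖z‖ ^ k * Real.exp (-‖z‖ ^ 2) = π * Real.Gamma (k / 2 + 1) := by
  have h := Complex.integral_rpow_mul_exp_neg_mul_rpow (p := 2) (q := k) (b := 1) one_le_two
    (by linarith [k.cast_nonneg (α := ℝ)]) one_pos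
  simp only [Real.rpow_natCast, Real.rpow_two, neg_mul, one_mul, Real.one_rpow, mul_one] at h
  rw [h, add_div, div_self two_ne_zero]
  ring

lemma Gamma_three_halves_sq : Real.Gamma (3 / 2) ^ 2 = π / 4 := by
  rw [show (3 / 2 : ℝ) = 1 / 2 + 1 by norm_num, Real.Gamma_add_one (by norm_num),
    Real.Gamma_one_half_eq, mul_pow, Real.sq_sqrt Real.pi_nonneg]
  ring

lemma Gamma_five_halves_sq : Real.Gamma (5 / 2) ^ 2 = 9 * π / 16 := by
  rw [show (5 / 2 : ℝ) = 3 / 2 + 1 by norm_num, Real.Gamma_add_one (by norm_num), mul_pow,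
    Gamma_three_halves_sq]
  ring

lemma gaussianPDFReal_zero_half (t : ℝ) :
    gaussianPDFReal 0 (1 / 2) t = (√π)⁻¹ * Real.exp (-t ^ 2) := by
  rw [gaussianPDFReal]
  push_cast
  congr 3 <;> ring

lemma gaussianReal_prod_gaussianReal_zero_half :
    (gaussianReal 0 (1 / 2)).prod (gaussianReal 0 (1 / 2)) = volume.withDensity
      fun p : ℝ × ℝ => ENNReal.ofReal (π⁻¹ * Real.exp (-(p.1 ^ 2 + p.2 ^ 2))) := by
  rw [gaussianReal_of_var_ne_zero _ (by norm_num), prod_withDensity (measurable_gaussianPDF _ _)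
    (measurable_gaussianPDF _ _), ← Measure.volume_eq_prod]
  congr 1 with p
  rw [gaussianPDF, gaussianPDF, ← ENNReal.ofReal_mul (gaussianPDFReal_nonneg _ _ _),
    gaussianPDFReal_zero_half, gaussianPDFReal_zero_half, neg_add, Real.exp_add]
  congr 1
  field_simp
  exact (Real.sq_sqrt Real.pi_nonneg).symm

namespace ProbabilityTheory

variable {Ω : Type*} [MeasurableSpace Ω] {P : Measure Ω}

lemma iIndepFun.curry {ι κ 𝓧 : Type*} [MeasurableSpace 𝓧] {X : ι → κ → Ω → 𝓧}
    (mX : ∀ i j, Measurable (X i j)) (h : iIndepFun (fun p : ι × κ => X p.1 p.2) P) :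
    iIndepFun (fun i ω j => X i j ω) P := by
  have := h.isProbabilityMeasure
  have hrow : ∀ i, P.map (fun ω j => X i j ω) = Measure.infinitePi fun j => P.map (X i j) :=
    fun i => (h.precomp (Prod.mk_right_injective i)).map_fun_eq_infinitePi_map (mX i)
  rw [iIndepFun_iff_map_fun_eq_infinitePi_map fun i => measurable_pi_lambda _ (mX i)]
  calc P.map (fun ω i j => X i j ω)
      = (P.map fun ω (p : ι × κ) => X p.1 p.2 ω).map (MeasurableEquiv.curry ι κ 𝓧) := by
        rw [Measure.map_map (f := fun ω (p : ι × κ) => X p.1 p.2 ω)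
          (MeasurableEquiv.measurable _) (measurable_pi_lambda _ fun p => mX p.1 p.2)]
        rfl
    _ = Measure.infinitePi fun i => Measure.infinitePi fun j => P.map (X i j) := by
        rw [h.map_fun_eq_infinitePi_map (X := fun p : ι × κ => X p.1 p.2) fun p => mX p.1 p.2]
        have := fun i j => Measure.isProbabilityMeasure_map (μ := P) (mX i j).aemeasurable
        exact Measure.infinitePi_map_curry fun i j => P.map (X i j)
    _ = _ := by simp_rw [hrow]

lemma IndepFun.integrable_add_pow_and_integral_eq {X Y : Ω → ℝ} (hXY : IndepFun X Y P) {n : ℕ}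
    (hX : ∀ k ≤ n, Integrable (fun ω => X ω ^ k) P)
    (hY : ∀ k ≤ n, Integrable (fun ω => Y ω ^ k) P) :
    Integrable (fun ω => (X ω + Y ω) ^ n) P ∧
      ∫ ω, (X ω + Y ω) ^ n ∂P
        = ∑ k ∈ range (n + 1), n.choose k * (∫ ω, X ω ^ k ∂P) * ∫ ω, Y ω ^ (n - k) ∂P := by
  have hterm : ∀ k ∈ range (n + 1), IndepFun (fun ω => X ω ^ k) (fun ω => Y ω ^ (n - k)) P ∧
      Integrable (fun ω => X ω ^ k) P ∧ Integrable (fun ω => Y ω ^ (n - k)) P := fun k hk =>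
    ⟨hXY.comp (measurable_id.pow_const k) (measurable_id.pow_const (n - k)),
      hX k (Nat.lt_succ_iff.mp (mem_range.mp hk)), hY _ (Nat.sub_le n k)⟩
  have hint : ∀ k ∈ range (n + 1),
      Integrable (fun ω => X ω ^ k * Y ω ^ (n - k) * n.choose k) P := fun k hk =>
    have ⟨hind, hXk, hYk⟩ := hterm k hk
    (hind.integrable_mul hXk hYk).mul_const _
  simp_rw [add_pow]
  refine ⟨integrable_finsetSum _ hint, ?_⟩
  rw [integral_finsetSum _ hint]
  refine sum_congr rfl fun k hk => ?_
  obtain ⟨hind, hXk, hYk⟩ := hterm k hk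
  rw [integral_mul_const, hind.integral_fun_mul_eq_mul_integral hXk.aestronglyMeasurable
    hYk.aestronglyMeasurable, mul_comm, mul_assoc]

lemma iIndepFun.integrable_sum_pow_and_integral_eq [IsProbabilityMeasure P] {ι : Type*}
    {X : ι → Ω → ℝ} (hX : iIndepFun X P) (hm : ∀ i, Measurable (X i))
    (hint : ∀ i k, Integrable (fun ω => X i ω ^ k) P) {μ : ℕ → ℝ}
    (hμ : ∀ i k, ∫ ω, X i ω ^ k ∂P = μ k) (s : Finset ι) (n : ℕ) :
    Integrable (fun ω => (∑ i ∈ s, X i ω) ^ n) P ∧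
      ∫ ω, (∑ i ∈ s, X i ω) ^ n ∂P = sumMoment μ s.card n := by
  classical
  induction s using Finset.induction_on generalizing n with
  | empty => simp [sumMoment]
  | @insert j s hj ih =>
    have hind : IndepFun (X j) (fun ω => ∑ i ∈ s, X i ω) P := by
      simpa only [sum_fn] using (hX.indepFun_finsetSum_of_notMem hm hj).symm
    obtain ⟨hint', hval⟩ := hind.integrable_add_pow_and_integral_eq (n := n)
      (fun k _ => hint j k) (fun k _ => (ih k).1)
    simp only [sum_insert hj, card_insert_of_notMem hj, sumMoment]
    refine ⟨hint', hval.trans (sum_congr rfl fun k _ => ?_)⟩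
    rw [hμ, (ih _).2]

variable [IsProbabilityMeasure P] {a b : Ω → ℝ} (ha : Measurable a) (hb : Measurable b)
  (hab : IndepFun a b P) (hla : P.map a = gaussianReal 0 (1 / 2))
  (hlb : P.map b = gaussianReal 0 (1 / 2))
include ha hb hab hla hlb

lemma IndepFun.integral_comp_add_I_mul_of_gaussianReal {F : ℂ → ℝ} (hF : Measurable F) :
    ∫ ω, F (a ω + I * b ω) ∂P = ∫ z, π⁻¹ * Real.exp (-‖z‖ ^ 2) * F z := by
  have hlaw : P.map (fun ω => (a ω, b ω)) = volume.withDensity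
      fun p : ℝ × ℝ => ENNReal.ofReal (π⁻¹ * Real.exp (-(p.1 ^ 2 + p.2 ^ 2))) := by
    rw [(indepFun_iff_map_prod_eq_prod_map_map ha.aemeasurable hb.aemeasurable).1 hab, hla, hlb,
      gaussianReal_prod_gaussianReal_zero_half]
  have hG : Measurable fun p : ℝ × ℝ => F (p.1 + I * p.2) := by fun_prop
  calc ∫ ω, F (a ω + I * b ω) ∂P
      = ∫ p, F (p.1 + I * p.2) ∂(P.map fun ω => (a ω, b ω)) :=
        (integral_map (ha.prodMk hb).aemeasurable hG.aestronglyMeasurable).symm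
    _ = ∫ p : ℝ × ℝ, π⁻¹ * Real.exp (-(p.1 ^ 2 + p.2 ^ 2)) * F (p.1 + I * p.2) := by
        rw [hlaw, integral_withDensity_eq_integral_toReal_smul (by fun_prop)
          (.of_forall fun _ => ENNReal.ofReal_lt_top)]
        congr 1 with p
        rw [ENNReal.toReal_ofReal (by positivity), smul_eq_mul]
    _ = ∫ z, π⁻¹ * Real.exp (-‖z‖ ^ 2) * F z := by
        rw [← Complex.volume_preserving_equiv_real_prod.integral_comp
          Complex.measurableEquivRealProd.measurableEmbedding]
        congr 1 with z
        rw [Complex.sq_norm, Complex.normSq_apply]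
        simp [Complex.re_add_im, mul_comm I, sq]

lemma IndepFun.integral_norm_add_I_mul_pow_of_gaussianReal (k : ℕ) :
    ∫ ω, ‖(a ω + I * b ω : ℂ)‖ ^ k ∂P = Real.Gamma (k / 2 + 1) := by
  rw [hab.integral_comp_add_I_mul_of_gaussianReal ha hb hla hlb (F := fun z => ‖z‖ ^ k)
    (by fun_prop)]
  simp_rw [mul_assoc, mul_comm (Real.exp _)]
  rw [integral_const_mul, integral_norm_pow_mul_exp_neg_sq, inv_mul_cancel_left₀ Real.pi_ne_zero]

lemma IndepFun.integrable_norm_add_I_mul_pow_of_gaussianReal (k : ℕ) :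
    Integrable (fun ω => ‖(a ω + I * b ω : ℂ)‖ ^ k) P :=
  .of_integral_ne_zero <| by
    rw [hab.integral_norm_add_I_mul_pow_of_gaussianReal ha hb hla hlb]
    exact (Real.Gamma_pos_of_pos (by positivity)).ne'

end ProbabilityTheory

lemma StdRealGaussians.comp_injective_s12 {Ω ι κ : Type*} [MeasurableSpace Ω] {P : Measure Ω}
    {x : ι → Ω → ℝ} (hx : StdRealGaussians P x) {g : κ → ι} (hg : g.Injective) :
    StdRealGaussians P (x ∘ g) :=
  ⟨fun i => hx.1 (g i), iIndepFun.precomp (g := g) hg hx.2.1, fun i => hx.2.2 (g i)⟩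

lemma StdRealGaussians.quadruples {Ω ι : Type*} [MeasurableSpace Ω] {P : Measure Ω}
    {x y u v : ι → Ω → ℝ} (h : StdRealGaussians P (Sum.elim (Sum.elim x y) (Sum.elim u v))) :
    StdRealGaussians P fun p : ι × Fin 4 => ![x p.1, y p.1, u p.1, v p.1] p.2 := by
  let index : ι × Fin 4 → (ι ⊕ ι) ⊕ (ι ⊕ ι) := fun p =>
    ![.inl (.inl p.1), .inl (.inr p.1), .inr (.inl p.1), .inr (.inr p.1)] p.2
  have hindex : index.Injective := by
    rintro ⟨i, j⟩ ⟨i', j'⟩ hij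
    fin_cases j <;> fin_cases j' <;> simp_all [index]
  convert h.comp_injective_s12 hindex using 1
  funext ⟨i, j⟩
  fin_cases j <;> rfl

noncomputable def cascadedGain (w : Fin 4 → ℝ) : ℝ :=
  ‖(w 0 + I * w 1 : ℂ)‖ * ‖(w 2 + I * w 3 : ℂ)‖

@[fun_prop]
lemma measurable_cascadedGain : Measurable cascadedGain := by
  unfold cascadedGain
  fun_prop

lemma StdRealGaussians.integrable_cascadedGain_pow_and_integral_eq {Ω : Type*}
    [MeasurableSpace Ω] {P : Measure Ω} [IsProbabilityMeasure P] {X : Fin 4 → Ω → ℝ}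
    (hX : StdRealGaussians P X) (k : ℕ) :
    Integrable (fun ω => cascadedGain (X · ω) ^ k) P ∧
      ∫ ω, cascadedGain (X · ω) ^ k ∂P = Real.Gamma (k / 2 + 1) ^ 2 := by
  obtain ⟨hm, hind, hlaw⟩ := hX
  let R : ℝ × ℝ → ℝ := fun p => ‖(p.1 + I * p.2 : ℂ)‖ ^ k
  have hRm : Measurable R := by fun_prop
  have hR : IndepFun (fun ω => R (X 0 ω, X 1 ω)) (fun ω => R (X 2 ω, X 3 ω)) P :=
    (hind.indepFun_prodMk_prodMk hm 0 1 2 3 (by decide) (by decide) (by decide) (by decide)).comp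
      hRm hRm
  have h01 := hind.indepFun (by decide : (0 : Fin 4) ≠ 1)
  have h23 := hind.indepFun (by decide : (2 : Fin 4) ≠ 3)
  have hsplit : (fun ω => cascadedGain (X · ω) ^ k)
      = fun ω => R (X 0 ω, X 1 ω) * R (X 2 ω, X 3 ω) := by
    funext ω
    exact mul_pow _ _ k
  rw [hsplit]
  refine ⟨hR.integrable_mul
    (h01.integrable_norm_add_I_mul_pow_of_gaussianReal (hm 0) (hm 1) (hlaw 0) (hlaw 1) k)
    (h23.integrable_norm_add_I_mul_pow_of_gaussianReal (hm 2) (hm 3) (hlaw 2) (hlaw 3) k), ?_⟩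
  rw [hR.integral_fun_mul_eq_mul_integral (by fun_prop) (by fun_prop),
    h01.integral_norm_add_I_mul_pow_of_gaussianReal (hm 0) (hm 1) (hlaw 0) (hlaw 1),
    h23.integral_norm_add_I_mul_pow_of_gaussianReal (hm 2) (hm 3) (hlaw 2) (hlaw 3), sq]

theorem stmt12 {Ω : Type*} [MeasurableSpace Ω] (P : Measure Ω) [IsProbabilityMeasure P]
    {M : ℕ} (x y u v : Fin M → Ω → ℝ)
    (hall : StdRealGaussians P (Sum.elim (Sum.elim x y) (Sum.elim u v)))
    (h g : Fin M → Ω → ℂ)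
    (hhdef : ∀ i ω, h i ω = x i ω + Complex.I * y i ω)
    (hgdef : ∀ i ω, g i ω = u i ω + Complex.I * v i ω) :
    ∫ ω, (∑ i, ‖h i ω‖ * ‖g i ω‖) ^ 4 ∂P
      = 4 * M + 6 * (M.choose 2 : ℝ) * (3 * Real.pi ^ 2 / 16 + 1)
        + 9 * (M.choose 3 : ℝ) * Real.pi ^ 2 / 4
        + 3 * (M.choose 4 : ℝ) * Real.pi ^ 4 / 32 := by
  set Q : Fin M × Fin 4 → Ω → ℝ := fun p => ![x p.1, y p.1, u p.1, v p.1] p.2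
  have hQ : StdRealGaussians P Q := hall.quadruples
  have hrow (i : Fin M) : StdRealGaussians P fun j => Q (i, j) :=
    hQ.comp_injective_s12 (Prod.mk_right_injective i)
  have hind : iIndepFun (fun i ω => cascadedGain fun j => Q (i, j) ω) P :=
    (hQ.2.1.curry fun i j => hQ.1 (i, j)).comp _ fun _ => measurable_cascadedGain
  have hgain (i : Fin M) (ω : Ω) : ‖h i ω‖ * ‖g i ω‖ = cascadedGain fun j => Q (i, j) ω := by
    simp [hhdef, hgdef, cascadedGain, Q]
  simp_rw [hgain]
  rw [(hind.integrable_sum_pow_and_integral_eq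
    (fun i => measurable_cascadedGain.comp (measurable_pi_lambda _ fun j => hQ.1 (i, j)))
    (fun i k => ((hrow i).integrable_cascadedGain_pow_and_integral_eq k).1)
    (fun i k => ((hrow i).integrable_cascadedGain_pow_and_integral_eq k).2) univ 4).2,
    card_univ, Fintype.card_fin, sumMoment_four (by simp)]
  norm_num [Gamma_three_halves_sq, Gamma_five_halves_sq]
  ring
end

section
/- (Proposition 2: outage probability in the fully correlated case with random phase shifts.) Let X, Y, ψ be mutually independent real random variables, where X and Y have the exponential distribution of rate 1 and ψ has the exponential distribution of rate 1/M (mean M), for a positive integer M. Then for every ξ > 0, 𝓟(ψ·X·Y < ξ) = 1 − (1/M)·∫₀^∞ e^{−s/M} (∫₀^∞ e^{−t − ξ/(s·t)} dt) ds (equivalently 1 − (2/M)·∫₀^∞ √(ξ/s)·e^{−s/M}·K₁(2√(ξ/s)) ds, where K₁ is the modified Bessel function of the second kind of order 1, using ∫₀^∞ e^{−t − w/t} dt = 2√w·K₁(2√w)). -/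
/-!
By independence the law of `(ψ, X, Y)` is a product measure, so Tonelli lets us condition on
`ψ = s` and `X = t`. The tail of the exponential law gives `𝓟(Y ≥ ξ / (s t)) = exp (-ξ / (s t))`;
averaging over `X` produces the inner integral `∫₀^∞ exp (-t - ξ / (s t)) dt ≤ 1`, and averaging
over `ψ` the outer one. The outage probability is the complement of the event `ψ X Y ≥ ξ`.
-/

open MeasureTheory ProbabilityTheory Real Set
open scoped ENNReal

namespace ProbabilityTheory

lemma iIndepFun.map_prodMk_prodMk_eq_prod {Ω β : Type*} [MeasurableSpace Ω] [MeasurableSpace β]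
    {P : Measure Ω} [IsFiniteMeasure P] {X Y Z : Ω → β}
    (hX : Measurable X) (hY : Measurable Y) (hZ : Measurable Z) (h : iIndepFun ![X, Y, Z] P) :
    P.map (fun ω ↦ (Z ω, X ω, Y ω)) = (P.map Z).prod ((P.map X).prod (P.map Y)) := by
  have hmeas : ∀ i, Measurable (![X, Y, Z] i) := by intro i; fin_cases i <;> assumption
  have hXY : P.map (fun ω ↦ (X ω, Y ω)) = (P.map X).prod (P.map Y) :=
    (indepFun_iff_map_prod_eq_prod_map_map hX.aemeasurable hY.aemeasurable).1
      (h.indepFun (by decide : (0 : Fin 3) ≠ 1))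
  rw [(indepFun_iff_map_prod_eq_prod_map_map hZ.aemeasurable (hX.prodMk hY).aemeasurable).1
    (h.indepFun_prodMk hmeas 0 1 2 (by decide) (by decide)).symm, hXY]

instance instSFiniteExpMeasure (r : ℝ) : SFinite (expMeasure r) := by
  unfold expMeasure gammaMeasure
  infer_instance

lemma ae_pos_expMeasure {r : ℝ} (hr : 0 < r) : ∀ᵐ x ∂expMeasure r, 0 < x := by
  rw [ae_iff]
  simp only [not_lt]
  change expMeasure r (Iic 0) = 0
  rw [expMeasure, gammaMeasure, withDensity_apply _ measurableSet_Iic]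
  exact (lintegral_exponentialPDF_eq_antiDeriv hr 0).trans (by simp)

lemma expMeasure_Ici {r c : ℝ} (hr : 0 < r) (hc : 0 ≤ c) :
    expMeasure r (Ici c) = ENNReal.ofReal (exp (-(r * c))) := by
  have := isProbabilityMeasure_expMeasure hr
  have hIio : expMeasure r (Iio c) = ENNReal.ofReal (1 - exp (-(r * c))) := by
    rw [expMeasure, gammaMeasure, withDensity_apply _ measurableSet_Iio,
      Measure.restrict_congr_set Iio_ae_eq_Iic]
    exact (lintegral_exponentialPDF_eq_antiDeriv hr c).trans (congrArg _ (if_pos hc))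
  have hle : 0 ≤ 1 - exp (-(r * c)) :=
    sub_nonneg.2 (exp_le_one_iff.2 (neg_nonpos.2 (mul_nonneg hr.le hc)))
  rw [← compl_Iio, prob_compl_eq_one_sub measurableSet_Iio, hIio, ← ENNReal.ofReal_one,
    ← ENNReal.ofReal_sub _ hle, sub_sub_cancel]

lemma lintegral_expMeasure (r : ℝ) {g : ℝ → ℝ≥0∞} (hg : Measurable g) :
    ∫⁻ x, g x ∂expMeasure r = ∫⁻ x in Ioi 0, ENNReal.ofReal (r * exp (-(r * x))) * g x := by
  have hsupp : (exponentialPDF r * g).support ⊆ Ici 0 := fun x hx ↦ by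
    by_contra hneg
    exact hx (by simp [exponentialPDF_of_neg (not_le.1 hneg)])
  rw [expMeasure, gammaMeasure, show gammaPDF 1 r = exponentialPDF r from rfl,
    lintegral_withDensity_eq_lintegral_mul _ (f := exponentialPDF r)
      (measurable_exponentialPDFReal r).ennreal_ofReal hg,
    ← setLIntegral_eq_of_support_subset hsupp, Measure.restrict_congr_set Ioi_ae_eq_Ici.symm]
  exact setLIntegral_congr_fun measurableSet_Ioi fun x hx ↦ by
    simp [exponentialPDF_of_nonneg (le_of_lt hx)]

lemma lintegral_ofReal_expMeasure {r : ℝ} (hr : 0 < r) {f : ℝ → ℝ} (hf : Measurable f)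
    (hf₀ : ∀ x, 0 ≤ f x) (hf₁ : ∀ x, 0 < x → f x ≤ 1) :
    ∫⁻ x, ENNReal.ofReal (f x) ∂expMeasure r
      = ENNReal.ofReal (∫ x in Ioi 0, r * exp (-(r * x)) * f x) := by
  have hdens : ∀ x, 0 ≤ r * exp (-(r * x)) := fun x ↦ mul_nonneg hr.le (exp_nonneg _)
  have hint : IntegrableOn (fun x ↦ r * exp (-(r * x)) * f x) (Ioi 0) := by
    refine Integrable.mono' ((exp_neg_integrableOn_Ioi 0 hr).const_mul r) (by fun_prop) ?_
    refine (ae_restrict_iff' measurableSet_Ioi).2 (ae_of_all _ fun x hx ↦ ?_)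
    rw [norm_of_nonneg (mul_nonneg (hdens x) (hf₀ x)), neg_mul]
    exact mul_le_of_le_one_right (hdens x) (hf₁ x hx)
  rw [lintegral_expMeasure r hf.ennreal_ofReal, ofReal_integral_eq_lintegral_ofReal hint
    (ae_of_all _ fun x ↦ mul_nonneg (hdens x) (hf₀ x))]
  exact setLIntegral_congr_fun measurableSet_Ioi fun x _ ↦ (ENNReal.ofReal_mul (hdens x)).symm

section OutageKernel

variable {ξ s : ℝ}

lemma exp_neg_sub_div_mul_le (hξ : 0 ≤ ξ) (hs : 0 < s) {t : ℝ} (ht : 0 < t) :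
    exp (-t - ξ / (s * t)) ≤ exp (-t) :=
  exp_le_exp.2 (sub_le_self _ (by positivity))

lemma integrableOn_exp_neg_sub_div_mul (hξ : 0 ≤ ξ) (hs : 0 < s) :
    IntegrableOn (fun t ↦ exp (-t - ξ / (s * t))) (Ioi 0) := by
  refine Integrable.mono' (integrableOn_exp_neg_Ioi 0) (by fun_prop) ?_
  refine (ae_restrict_iff' measurableSet_Ioi).2 (ae_of_all _ fun t ht ↦ ?_)
  rw [norm_of_nonneg (exp_nonneg _)]
  exact exp_neg_sub_div_mul_le hξ hs ht

lemma integral_exp_neg_sub_div_mul_le_one (hξ : 0 ≤ ξ) (hs : 0 < s) :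
    ∫ t in Ioi 0, exp (-t - ξ / (s * t)) ≤ 1 := by
  calc ∫ t in Ioi 0, exp (-t - ξ / (s * t)) ≤ ∫ t in Ioi 0, exp (-t) :=
        setIntegral_mono_on (integrableOn_exp_neg_sub_div_mul hξ hs)
          (integrableOn_exp_neg_Ioi 0) measurableSet_Ioi
          fun t ht ↦ exp_neg_sub_div_mul_le hξ hs ht
    _ = 1 := by rw [integral_exp_neg_Ioi, neg_zero, exp_zero]

lemma measurable_integral_exp_neg_sub_div_mul :
    Measurable fun s ↦ ∫ t in Ioi 0, exp (-t - ξ / (s * t)) :=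
  (StronglyMeasurable.integral_prod_right'
    (f := fun p : ℝ × ℝ ↦ exp (-p.2 - ξ / (p.1 * p.2))) (by fun_prop)).measurable

lemma expMeasure_prod_setOf_le_mul (hξ : 0 ≤ ξ) (hs : 0 < s) :
    ((expMeasure 1).prod (expMeasure 1)) {q : ℝ × ℝ | ξ ≤ s * q.1 * q.2}
      = ENNReal.ofReal (∫ t in Ioi 0, exp (-t - ξ / (s * t))) := by
  have hslice : ∀ x, 0 < x →
      expMeasure 1 {y | ξ ≤ s * x * y} = ENNReal.ofReal (exp (-(ξ / (s * x)))) := by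
    intro x hx
    have hset : {y | ξ ≤ s * x * y} = Ici (ξ / (s * x)) := by
      ext y
      simp [div_le_iff₀' (mul_pos hs hx)]
    rw [hset, expMeasure_Ici one_pos (by positivity), one_mul]
  rw [Measure.prod_apply (measurableSet_le measurable_const (by fun_prop))]
  simp only [preimage_ofPred_eq]
  rw [lintegral_congr_ae ((ae_pos_expMeasure one_pos).mono hslice),
    lintegral_ofReal_expMeasure one_pos (by fun_prop) (fun _ ↦ exp_nonneg _)
      fun x hx ↦ exp_le_one_iff.2 (neg_nonpos.2 (by positivity))]
  congr 1
  refine setIntegral_congr_fun measurableSet_Ioi fun t _ ↦ ?_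
  rw [one_mul, one_mul, ← exp_add, sub_eq_add_neg]

end OutageKernel

lemma expMeasure_prod_prod_setOf_le_mul_mul {r ξ : ℝ} (hr : 0 < r) (hξ : 0 ≤ ξ) :
    ((expMeasure r).prod ((expMeasure 1).prod (expMeasure 1)))
        {p : ℝ × ℝ × ℝ | ξ ≤ p.1 * p.2.1 * p.2.2}
      = ENNReal.ofReal (∫ s in Ioi 0,
          r * exp (-(r * s)) * ∫ t in Ioi 0, exp (-t - ξ / (s * t))) := by
  rw [Measure.prod_apply (measurableSet_le measurable_const (by fun_prop))]
  simp only [preimage_ofPred_eq]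
  rw [lintegral_congr_ae ((ae_pos_expMeasure hr).mono fun s hs ↦
      expMeasure_prod_setOf_le_mul hξ hs),
    lintegral_ofReal_expMeasure hr measurable_integral_exp_neg_sub_div_mul
      (fun s ↦ integral_nonneg fun _ ↦ exp_nonneg _)
      fun s hs ↦ integral_exp_neg_sub_div_mul_le_one hξ hs]

lemma expMeasure_prod_prod_setOf_mul_mul_lt {r ξ : ℝ} (hr : 0 < r) (hξ : 0 ≤ ξ) :
    ((expMeasure r).prod ((expMeasure 1).prod (expMeasure 1)))
        {p : ℝ × ℝ × ℝ | p.1 * p.2.1 * p.2.2 < ξ}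
      = ENNReal.ofReal (1 - ∫ s in Ioi 0,
          r * exp (-(r * s)) * ∫ t in Ioi 0, exp (-t - ξ / (s * t))) := by
  have := isProbabilityMeasure_expMeasure hr
  have := isProbabilityMeasure_expMeasure one_pos
  have hnonneg : 0 ≤ ∫ s in Ioi 0, r * exp (-(r * s)) * ∫ t in Ioi 0, exp (-t - ξ / (s * t)) :=
    integral_nonneg fun s ↦ mul_nonneg (mul_nonneg hr.le (exp_nonneg _))
      (integral_nonneg fun _ ↦ exp_nonneg _)
  have hcompl : {p : ℝ × ℝ × ℝ | p.1 * p.2.1 * p.2.2 < ξ}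
      = {p : ℝ × ℝ × ℝ | ξ ≤ p.1 * p.2.1 * p.2.2}ᶜ := by
    ext; simp
  rw [hcompl, prob_compl_eq_one_sub (measurableSet_le measurable_const (by fun_prop)),
    expMeasure_prod_prod_setOf_le_mul_mul hr hξ, ← ENNReal.ofReal_one,
    ← ENNReal.ofReal_sub _ hnonneg]

end ProbabilityTheory

theorem stmt18 {Ω : Type*} [MeasurableSpace Ω] (P : Measure Ω) [IsProbabilityMeasure P]
    {M : ℕ} (hM : 0 < M)
    (X Y ψ : Ω → ℝ) (hX : Measurable X) (hY : Measurable Y) (hψ : Measurable ψ)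
    (hindep : iIndepFun ![X, Y, ψ] P)
    (hXlaw : Measure.map X P = expMeasure 1)
    (hYlaw : Measure.map Y P = expMeasure 1)
    (hψlaw : Measure.map ψ P = expMeasure (1 / (M : ℝ))) :
    ∀ ξ : ℝ, 0 < ξ →
      P {ω | ψ ω * X ω * Y ω < ξ}
        = ENNReal.ofReal
            (1 - (1 / (M : ℝ)) *
              ∫ s in Set.Ioi (0:ℝ), Real.exp (-s / M) *
                ∫ t in Set.Ioi (0:ℝ), Real.exp (-t - ξ / (s * t))) := by
  intro ξ hξ
  have hr : (0 : ℝ) < 1 / M := one_div_pos.2 (Nat.cast_pos.2 hM)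
  have hlaw := hindep.map_prodMk_prodMk_eq_prod hX hY hψ
  rw [hψlaw, hXlaw, hYlaw] at hlaw
  calc P {ω | ψ ω * X ω * Y ω < ξ}
      = P.map (fun ω ↦ (ψ ω, X ω, Y ω)) {p : ℝ × ℝ × ℝ | p.1 * p.2.1 * p.2.2 < ξ} :=
        (Measure.map_apply (hψ.prodMk (hX.prodMk hY)) (measurableSet_lt
          (f := fun p : ℝ × ℝ × ℝ ↦ p.1 * p.2.1 * p.2.2) (by fun_prop) measurable_const)).symm
    _ = _ := by
        rw [hlaw, expMeasure_prod_prod_setOf_mul_mul_lt hr hξ.le, ← integral_const_mul]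
        congr 3 with s
        rw [mul_assoc, show -(1 / (M : ℝ) * s) = -s / M by ring]
end
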